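/- For every positive integer n, real β > 1, and real γ > 0, the Dirichlet series ∑_{k=1}^∞ σ_{-γ}(n;k)/k^β converges and equals ∏_{j=0}^{n-1} ζ(β + jγ), where ζ is the Riemann zeta function. -/

import Mathlib

noncomputable def sigmaNeg (γ : ℝ) (k : ℕ) : ℝ := ∑ d ∈ k.divisors, (d : ℝ) ^ (-γ)

/-- The radical of `k`: the product of the distinct primes dividing `k`. -/
def rad (k : ℕ) : ℕ := ∏ p ∈ k.primeFactors, p

/-- The D-shifted factorial σ_{-γ}(a;k): equal to `1` when `a = 1` (empty product),
and to `∏_{j=0}^{a-2} σ_{-γ}(k·rad(k)^j)/σ_{-γ}(rad(k)^j)` otherwise. -/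
noncomputable def Dfac (γ : ℝ) (a k : ℕ) : ℝ :=
  ∏ j ∈ Finset.range (a - 1), sigmaNeg γ (k * rad k ^ j) / sigmaNeg γ (rad k ^ j)

/-!
Both sides are Dirichlet series of multiplicative functions: the product of zeta values is
the L-series of the Dirichlet convolution `∏_{j<n} (k ↦ k^{-jγ})`, and `Dfac γ n` is
multiplicative because `σ_{-γ}` is and `rad` splits over coprime factors. So it suffices to
compare the two at a prime power `p^e`. With `x = p^{-γ}`, the factors of `Dfac γ n (p^e)`
are quotients of geometric sums `1 + x + ⋯ + x^m`, and their product is the Gaussian binomial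
coefficient `[n - 1 + e choose n - 1]_x`. The convolution coefficient at `p^e` satisfies the
recursion `c_{m+1}(e) = ∑_{i+j=e} c_m(i) x^{(m+1)j}`, which the Gaussian binomials also
satisfy by the `x`-Pascal rule.
-/

open Finset ArithmeticFunction LSeries
open scoped ArithmeticFunction.zeta LSeries.notation

noncomputable def geomSum (x : ℝ) (m : ℕ) : ℝ := ∑ i ∈ range (m + 1), x ^ i

/-- The Gaussian binomial coefficient `[n + e choose n]_x`. -/
noncomputable def gaussBinom (x : ℝ) (n e : ℕ) : ℝ :=
  ∏ j ∈ range n, geomSum x (e + j) / geomSum x j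

lemma geomSum_pos {x : ℝ} (hx : 0 ≤ x) (m : ℕ) : 0 < geomSum x m :=
  sum_pos' (fun i _ => pow_nonneg hx i) ⟨0, by simp, by simp⟩

lemma geomSum_add (x : ℝ) (a b : ℕ) :
    geomSum x (a + b + 1) = geomSum x a + x ^ (a + 1) * geomSum x b := by
  rw [geomSum, show a + b + 1 + 1 = (a + 1) + (b + 1) by omega, sum_range_add, geomSum,
    geomSum, mul_sum]
  simp only [pow_add x (a + 1)]

lemma gaussBinom_zero_right {x : ℝ} (hx : 0 ≤ x) (n : ℕ) : gaussBinom x n 0 = 1 :=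
  prod_eq_one fun j _ => by rw [zero_add, div_self (geomSum_pos hx j).ne']

lemma gaussBinom_succ (x : ℝ) (n e : ℕ) :
    gaussBinom x (n + 1) e = gaussBinom x n e * (geomSum x (e + n) / geomSum x n) :=
  prod_range_succ _ _

lemma gaussBinom_succ_eq_succ_right (x : ℝ) (n e : ℕ) :
    gaussBinom x (n + 1) e = gaussBinom x n (e + 1) * (geomSum x e / geomSum x n) := by
  simp only [gaussBinom, prod_div_distrib]
  rw [prod_range_succ' (fun j => geomSum x (e + j)), prod_range_succ, add_zero]
  simp only [add_assoc, add_comm 1]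
  ring

lemma gaussBinom_succ_succ {x : ℝ} (hx : 0 ≤ x) (n e : ℕ) :
    gaussBinom x (n + 1) (e + 1) =
      gaussBinom x n (e + 1) + x ^ (n + 1) * gaussBinom x (n + 1) e := by
  rw [gaussBinom_succ, gaussBinom_succ_eq_succ_right, show e + 1 + n = n + e + 1 by omega,
    geomSum_add]
  field_simp [(geomSum_pos hx n).ne']

lemma sum_antidiagonal_gaussBinom_mul_pow {x : ℝ} (hx : 0 ≤ x) (n e : ℕ) :
    ∑ ij ∈ antidiagonal e, gaussBinom x n ij.1 * (x ^ (n + 1)) ^ ij.2 =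
      gaussBinom x (n + 1) e := by
  induction e with
  | zero => simp [gaussBinom_zero_right hx]
  | succ e ih =>
    rw [Nat.sum_antidiagonal_succ', gaussBinom_succ_succ hx, ← ih, mul_sum]
    simp only [pow_succ, pow_zero, mul_one]
    congr 1
    exact sum_congr rfl fun _ _ => by ring

lemma rad_dvd (k : ℕ) : rad k ∣ k := Nat.prod_primeFactors_dvd k

lemma rad_prime_pow {p e : ℕ} (hp : p.Prime) (he : e ≠ 0) : rad (p ^ e) = p := by
  rw [rad, Nat.primeFactors_prime_pow he hp, prod_singleton]

lemma rad_mul {a b : ℕ} (h : a.Coprime b) (ha : a ≠ 0) (hb : b ≠ 0) :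
    rad (a * b) = rad a * rad b := by
  rw [rad, Nat.primeFactors_mul ha hb, prod_union h.disjoint_primeFactors, rad, rad]

noncomputable def powNeg (α : ℝ) : ArithmeticFunction ℝ :=
  toArithmeticFunction fun k => (k : ℝ) ^ (-α)

lemma powNeg_apply {α : ℝ} {k : ℕ} (hk : k ≠ 0) : powNeg α k = (k : ℝ) ^ (-α) := by
  simp [powNeg, toArithmeticFunction, hk]

lemma powNeg_pow (α : ℝ) {q : ℕ} (hq : q ≠ 0) (i : ℕ) :
    powNeg α (q ^ i) = ((q : ℝ) ^ (-α)) ^ i := by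
  rw [powNeg_apply (pow_ne_zero i hq), Nat.cast_pow, Real.rpow_pow_comm (Nat.cast_nonneg q)]

lemma isMultiplicative_powNeg (α : ℝ) : (powNeg α).IsMultiplicative := by
  refine IsMultiplicative.iff_ne_zero.mpr ⟨by simp [powNeg_apply], fun hm hn _ => ?_⟩
  rw [powNeg_apply (mul_ne_zero hm hn), powNeg_apply hm, powNeg_apply hn, Nat.cast_mul,
    Real.mul_rpow (Nat.cast_nonneg _) (Nat.cast_nonneg _)]

lemma sigmaNeg_eq_zeta_mul_powNeg (γ : ℝ) (k : ℕ) :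
    sigmaNeg γ k = ((ζ : ArithmeticFunction ℝ) * powNeg γ) k := by
  rw [coe_zeta_mul_apply, sigmaNeg]
  exact sum_congr rfl fun d hd => (powNeg_apply (Nat.pos_of_mem_divisors hd).ne').symm

lemma sigmaNeg_mul (γ : ℝ) {m n : ℕ} (h : m.Coprime n) :
    sigmaNeg γ (m * n) = sigmaNeg γ m * sigmaNeg γ n := by
  simp only [sigmaNeg_eq_zeta_mul_powNeg]
  exact (isMultiplicative_zeta.natCast.mul (isMultiplicative_powNeg γ)).map_mul_of_coprime h

lemma sigmaNeg_prime_pow (γ : ℝ) {p : ℕ} (hp : p.Prime) (m : ℕ) :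
    sigmaNeg γ (p ^ m) = geomSum ((p : ℝ) ^ (-γ)) m := by
  rw [sigmaNeg_eq_zeta_mul_powNeg, coe_zeta_mul_apply, Nat.sum_divisors_prime_pow hp, geomSum]
  exact sum_congr rfl fun i _ => powNeg_pow γ hp.ne_zero i

lemma Dfac_prime_pow (γ : ℝ) (n : ℕ) {p e : ℕ} (hp : p.Prime) (he : e ≠ 0) :
    Dfac γ n (p ^ e) = gaussBinom ((p : ℝ) ^ (-γ)) (n - 1) e := by
  refine prod_congr rfl fun j _ => ?_
  rw [rad_prime_pow hp he, ← pow_add, sigmaNeg_prime_pow γ hp, sigmaNeg_prime_pow γ hp]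

lemma Dfac_mul (γ : ℝ) (n : ℕ) {a b : ℕ} (h : a.Coprime b) (ha : a ≠ 0) (hb : b ≠ 0) :
    Dfac γ n (a * b) = Dfac γ n a * Dfac γ n b := by
  rw [Dfac, Dfac, Dfac, ← prod_mul_distrib]
  refine prod_congr rfl fun j _ => ?_
  have hrad : (rad a ^ j).Coprime (rad b ^ j) :=
    ((h.pow j j).coprime_dvd_left (pow_dvd_pow_of_dvd (rad_dvd a) j)).coprime_dvd_right
      (pow_dvd_pow_of_dvd (rad_dvd b) j)
  have hdvd (c : ℕ) : c * rad c ^ j ∣ c ^ (j + 1) :=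
    pow_succ' c j ▸ mul_dvd_mul_left c (pow_dvd_pow_of_dvd (rad_dvd c) j)
  have hnum : (a * rad a ^ j).Coprime (b * rad b ^ j) :=
    ((h.pow _ _).coprime_dvd_left (hdvd a)).coprime_dvd_right (hdvd b)
  rw [rad_mul h ha hb, mul_pow, mul_mul_mul_comm, sigmaNeg_mul γ hnum, sigmaNeg_mul γ hrad,
    mul_div_mul_comm]

lemma isMultiplicative_Dfac (γ : ℝ) (n : ℕ) :
    (toArithmeticFunction (Dfac γ n)).IsMultiplicative := by
  refine IsMultiplicative.iff_ne_zero.mpr ⟨?_, fun hm hn h => ?_⟩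
  · simp [toArithmeticFunction, Dfac, rad, sigmaNeg]
  · simp [toArithmeticFunction, hm, hn, Dfac_mul γ n h hm hn]

lemma ArithmeticFunction.mul_apply_prime_pow {R : Type*} [Semiring R] (f g : ArithmeticFunction R)
    {p : ℕ} (hp : p.Prime) (e : ℕ) :
    (f * g) (p ^ e) = ∑ ij ∈ antidiagonal e, f (p ^ ij.1) * g (p ^ ij.2) := by
  rw [mul_apply, Nat.sum_divisorsAntidiagonal (f := fun a b => f a * g b),
    Nat.sum_divisors_prime_pow hp, Nat.sum_antidiagonal_eq_sum_range_succ_mk]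
  exact sum_congr rfl fun i hi => by rw [Nat.pow_div (Nat.lt_succ_iff.mp (mem_range.mp hi)) hp.pos]

lemma prod_powNeg_prime_pow (γ : ℝ) (m : ℕ) {p : ℕ} (hp : p.Prime) (e : ℕ) :
    (∏ j ∈ range (m + 1), powNeg (j * γ)) (p ^ e) = gaussBinom ((p : ℝ) ^ (-γ)) m e := by
  have hx : 0 ≤ (p : ℝ) ^ (-γ) := by positivity
  induction m generalizing e with
  | zero => simp [powNeg_pow _ hp.ne_zero, gaussBinom]
  | succ m ih =>
    rw [prod_range_succ, mul_apply_prime_pow _ _ hp, ← sum_antidiagonal_gaussBinom_mul_pow hx]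
    refine sum_congr rfl fun ij _ => ?_
    rw [ih, powNeg_pow _ hp.ne_zero, ← Real.rpow_mul_natCast (Nat.cast_nonneg p) (-γ) (m + 1),
      mul_comm (-γ), mul_neg, mul_comm]

lemma prod_powNeg_eq_Dfac (γ : ℝ) (m : ℕ) :
    ∏ j ∈ range (m + 1), powNeg (j * γ) = toArithmeticFunction (Dfac γ (m + 1)) := by
  have hprod := isMultiplicative_finsetProd _ (range (m + 1))
    fun j _ => isMultiplicative_powNeg (j * γ)
  refine (IsMultiplicative.eq_iff_eq_on_prime_powers _ hprod _
    (isMultiplicative_Dfac γ (m + 1))).mpr fun p e hp => ?_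
  rcases eq_or_ne e 0 with rfl | he
  · rw [pow_zero, hprod.map_one, (isMultiplicative_Dfac γ (m + 1)).map_one]
  · simp [toArithmeticFunction, he, hp.ne_zero, prod_powNeg_prime_pow γ m hp,
      Dfac_prime_pow γ _ hp he]

lemma ofReal_comp_mul_eq_convolution (f g : ArithmeticFunction ℝ) :
    (fun k => ((f * g) k : ℂ)) = (fun k => (f k : ℂ)) ⍟ fun k => (g k : ℂ) := by
  ext k
  rw [convolution_def, mul_apply]
  push_cast
  rfl

lemma LSeriesHasSum_powNeg {α β : ℝ} (hα : 0 ≤ α) (hβ : 1 < β) :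
    LSeriesHasSum (fun k => (powNeg α k : ℂ)) β (riemannZeta (β + α)) := by
  have hre : 1 < ((β : ℂ) + α).re := by simp only [Complex.add_re, Complex.ofReal_re]; linarith
  refine (LSeriesHasSum_one hre).congr_fun fun k => ?_
  rcases eq_or_ne k 0 with rfl | hk
  · simp
  have hk' : (k : ℂ) ≠ 0 := Nat.cast_ne_zero.mpr hk
  rw [term_of_ne_zero hk, term_of_ne_zero hk, powNeg_apply hk, Pi.one_apply,
    Complex.ofReal_cpow (Nat.cast_nonneg k)]
  push_cast
  rw [Complex.cpow_neg, Complex.cpow_add _ _ hk']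
  field_simp

lemma LSeriesHasSum_prod_powNeg {β γ : ℝ} (hβ : 1 < β) (hγ : 0 ≤ γ) (n : ℕ) :
    LSeriesHasSum (fun k => ((∏ j ∈ range n, powNeg (j * γ)) k : ℂ)) β
      (∏ j ∈ range n, riemannZeta (β + j * γ)) := by
  induction n with
  | zero =>
    have hδ : (fun k => ((1 : ArithmeticFunction ℝ) k : ℂ)) = δ := by
      ext k
      rcases eq_or_ne k 1 with rfl | hk <;> simp [one_apply, delta, *]
    rw [prod_range_zero, prod_range_zero, hδ, LSeriesHasSum, funext (term_delta β)]
    exact hasSum_ite_eq 1 1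
  | succ n ih =>
    rw [prod_range_succ, prod_range_succ, ofReal_comp_mul_eq_convolution]
    have h := ih.convolution (LSeriesHasSum_powNeg (by positivity : 0 ≤ (n : ℝ) * γ) hβ)
    push_cast at h
    exact h

lemma LSeriesHasSum.hasSum_pnat {f : ℕ → ℂ} {s a : ℂ} (h : LSeriesHasSum f s a) :
    HasSum (fun k : ℕ+ => f k / (k : ℂ) ^ s) a := by
  have hpnat := (hasSum_pnat_iff (f := term f s)).mpr (by rwa [term_zero, add_zero])
  exact hpnat.congr_fun fun k => by rw [term_of_ne_zero k.ne_zero]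

theorem stmt8 (n : ℕ) (hn : 1 ≤ n) (β γ : ℝ) (hβ : 1 < β) (hγ : 0 < γ) :
    HasSum (fun k : ℕ+ => (Dfac γ n k : ℂ) / (k : ℂ) ^ (β : ℂ))
      (∏ j ∈ Finset.range n, riemannZeta (β + j * γ)) := by
  obtain ⟨m, rfl⟩ : ∃ m, n = m + 1 := ⟨n - 1, by omega⟩
  have h := LSeriesHasSum_prod_powNeg hβ hγ.le (m + 1)
  rw [prod_powNeg_eq_Dfac] at h
  refine h.hasSum_pnat.congr_fun fun k => ?_
  simp [toArithmeticFunction, k.ne_zero]
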